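/- Let (Ω,𝒜,μ) be a probability space, Σ a sub-σ-algebra of 𝒜, and τ : Ω → Ω a measurable map such that (i) E[χ_{τ⁻¹(A)} | Σ] = E[χ_A | Σ] μ-a.e. for every A ∈ 𝒜, (ii) for each A ∈ 𝒜 there exists B_A ∈ 𝒜 with μ(A Δ τ⁻¹(B_A)) = 0, and (iii) for every f ∈ L¹(μ) the Cesàro means (1/n)∑_{k=0}^{n-1} f∘τ^k converge μ-a.e. to E[f | Σ] as n → ∞. Then for every integer n ≥ 1 and every A ∈ 𝒜 there exists B ∈ 𝒜 such that μ(τ^{-i}(B) ∩ τ^{-j}(B)) = 0 for all 0 ≤ i < j ≤ n−1, and, with C = ⋃_{j=0}^{n-1} τ^{-j}(B), E[χ_C | Σ] ≥ (χ_{{ω : E[χ_A|Σ](ω) > 0}} − (n−1)·E[χ_A | Σ])⁺ μ-a.e. -/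

import Mathlib

open MeasureTheory Filter Topology Set

/-- **Kakutani–Rokhlin lemma for conditionally ergodic processes on probability spaces.**
If `τ` preserves the conditional expectation w.r.t. a sub-σ-algebra `m`, every set agrees
mod `μ` with a preimage under `τ`, and the Cesàro means of every integrable function
converge a.e. to its conditional expectation, then for every `n ≥ 1` and every
measurable `A` there is a measurable `B` whose first `n` preimage-iterates are a.e.
pairwise disjoint and whose tower `C = ⋃_{j<n} τ⁻ʲ(B)` satisfies
`E[χ_C|m] ≥ (χ_{{E[χ_A|m] > 0}} - (n-1)·E[χ_A|m])⁺` a.e. -/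
theorem kakutani_rokhlin_conditional {Ω : Type*} (m : MeasurableSpace Ω) {m0 : MeasurableSpace Ω}
    (μ : Measure Ω) [IsProbabilityMeasure μ]
    (hm : m ≤ m0)
    (τ : Ω → Ω) (hτ : Measurable τ)
    (h1 : ∀ A : Set Ω, MeasurableSet A →
      μ[(τ ⁻¹' A).indicator (fun _ => (1 : ℝ)) | m]
        =ᵐ[μ] μ[A.indicator (fun _ => (1 : ℝ)) | m])
    (h2 : ∀ A : Set Ω, MeasurableSet A →
      ∃ B : Set Ω, MeasurableSet B ∧ μ (symmDiff A (τ ⁻¹' B)) = 0)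
    (h3 : ∀ f : Ω → ℝ, Integrable f μ → ∀ᵐ ω ∂μ,
      Tendsto (fun k : ℕ => (k : ℝ)⁻¹ * ∑ i ∈ Finset.range k, f (τ^[i] ω)) atTop
        (𝓝 ((μ[f | m]) ω)))
    (n : ℕ) (hn : 1 ≤ n) (A : Set Ω) (hA : MeasurableSet A) :
    ∃ B : Set Ω, MeasurableSet B ∧
      (∀ i j : ℕ, i < n → j < n → i ≠ j → μ ((τ^[i] ⁻¹' B) ∩ (τ^[j] ⁻¹' B)) = 0) ∧
      ∀ᵐ ω ∂μ,
        ({ω' : Ω | 0 < (μ[A.indicator (fun _ => (1 : ℝ)) | m]) ω'}.indicator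
            (fun _ => (1 : ℝ)) ω
          - ((n - 1 : ℕ) : ℝ) * (μ[A.indicator (fun _ => (1 : ℝ)) | m]) ω) ⊔ 0
        ≤ (μ[(⋃ j ∈ Finset.range n, τ^[j] ⁻¹' B).indicator (fun _ => (1 : ℝ)) | m]) ω := by
  classical
  -- the base of the tower: points whose first positive hitting time of A is divisible by n
  set B : Set Ω := ⋃ T : ℕ, ⋃ _ : 0 < T ∧ n ∣ T,
      (τ^[T] ⁻¹' A ∩ ⋂ k : ℕ, ⋂ _ : 0 < k ∧ k < T, (τ^[k] ⁻¹' A)ᶜ) with hBdef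
  have hBmem : ∀ ω : Ω, ω ∈ B ↔ ∃ T : ℕ, (0 < T ∧ n ∣ T) ∧ τ^[T] ω ∈ A ∧
      ∀ k : ℕ, 0 < k → k < T → τ^[k] ω ∉ A := by
    intro ω
    simp only [hBdef, Set.mem_iUnion, Set.mem_inter_iff, Set.mem_iInter, Set.mem_compl_iff,
      Set.mem_preimage]
    constructor
    · rintro ⟨T, hT, hTA, hmin⟩; exact ⟨T, hT, hTA, fun k hk hkT => hmin k ⟨hk, hkT⟩⟩
    · rintro ⟨T, hT, hTA, hmin⟩; exact ⟨T, hT, hTA, fun k hk => hmin k hk.1 hk.2⟩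
  have hBmeas : MeasurableSet B := by
    refine MeasurableSet.iUnion fun T => MeasurableSet.iUnion fun _ => ?_
    exact ((hτ.iterate T) hA).inter
      (MeasurableSet.iInter fun k => MeasurableSet.iInter fun _ => ((hτ.iterate k) hA).compl)
  -- genuine disjointness of the levels
  have hdisj : ∀ i j : ℕ, i < j → j < n → (τ^[i] ⁻¹' B) ∩ (τ^[j] ⁻¹' B) = ∅ := by
    intro i j hij hjn
    ext ω
    simp only [Set.mem_inter_iff, Set.mem_preimage, Set.mem_empty_iff_false, iff_false, not_and]
    intro hiB hjB
    rcases (hBmem (τ^[i] ω)).1 hiB with ⟨Ti, ⟨hTi0, hTidvd⟩, hTiA, hTimin⟩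
    rcases (hBmem (τ^[j] ω)).1 hjB with ⟨Tj, ⟨hTj0, hTjdvd⟩, hTjA, hTjmin⟩
    rw [← Function.iterate_add_apply] at hTiA hTjA
    have hTin : n ≤ Ti := Nat.le_of_dvd hTi0 hTidvd
    have hTjn : n ≤ Tj := Nat.le_of_dvd hTj0 hTjdvd
    rcases lt_trichotomy (Ti + i) (Tj + j) with h | h | h
    · have hk := hTjmin (Ti + i - j) (by omega) (by omega)
      rw [← Function.iterate_add_apply] at hk
      have he : Ti + i - j + j = Ti + i := by omega
      rw [he] at hk
      exact hk hTiA
    · have hd : n ∣ Ti - Tj := Nat.dvd_sub hTidvd hTjdvd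
      have he : Ti - Tj = j - i := by omega
      have := Nat.le_of_dvd (by omega) (he ▸ hd)
      omega
    · have hk := hTimin (Tj + j - i) (by omega) (by omega)
      rw [← Function.iterate_add_apply] at hk
      have he : Tj + j - i + i = Tj + j := by omega
      rw [he] at hk
      exact hk hTjA
  refine ⟨B, hBmeas, ?_, ?_⟩
  · intro i j hi hj hne
    rcases hne.lt_or_gt with h | h
    · rw [hdisj i j h hj]; exact measure_empty
    · rw [Set.inter_comm, hdisj j i h hi]; exact measure_empty
  -- analytic part
  have hfInt : Integrable (A.indicator fun _ => (1 : ℝ)) μ := by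
    exact Integrable.indicator (integrable_const (1 : ℝ)) hA
  -- indicators of iterated preimages
  set g : ℕ → Ω → ℝ := fun k => (τ^[k] ⁻¹' A).indicator (fun _ => (1 : ℝ)) with hgdef
  have hgInt : ∀ k, Integrable (g k) μ := by
    intro k
    exact Integrable.indicator (integrable_const (1 : ℝ)) ((hτ.iterate k) hA)
  have hgE : ∀ k, μ[g k | m] =ᵐ[μ] μ[A.indicator (fun _ => (1 : ℝ)) | m] := by
    intro k
    induction k with
    | zero =>
        have : g 0 = A.indicator (fun _ => (1 : ℝ)) := by
          simp [hgdef]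
        rw [this]
    | succ k ih =>
        have hpre : τ^[k + 1] ⁻¹' A = τ ⁻¹' (τ^[k] ⁻¹' A) := by
          rw [Function.iterate_succ, Set.preimage_comp]
        have : g (k + 1) = (τ ⁻¹' (τ^[k] ⁻¹' A)).indicator (fun _ => (1 : ℝ)) := by
          rw [hgdef]; simp only; rw [hpre]
        rw [this]
        exact (h1 _ ((hτ.iterate k) hA)).trans ih
  -- the sweep-out set W
  set W : Set Ω := ⋃ k : ℕ, ⋃ _ : 0 < k, τ^[k] ⁻¹' A with hWdef
  have hWmem : ∀ ω : Ω, ω ∈ W ↔ ∃ k : ℕ, 0 < k ∧ τ^[k] ω ∈ A := by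
    intro ω; simp [hWdef]
  have hWmeas : MeasurableSet W :=
    MeasurableSet.iUnion fun k => MeasurableSet.iUnion fun _ => (hτ.iterate k) hA
  have hWInt : Integrable (W.indicator fun _ => (1 : ℝ)) μ := by
    exact Integrable.indicator (integrable_const (1 : ℝ)) hWmeas
  -- a.e. on {E > 0} the orbit hits A at a positive time
  have hSW : ∀ᵐ ω ∂μ, 0 < (μ[A.indicator (fun _ => (1 : ℝ)) | m]) ω → ω ∈ W := by
    filter_upwards [h3 _ hfInt] with ω hω hpos
    by_contra hωW
    have hzero : ∀ k : ℕ, 0 < k → τ^[k] ω ∉ A := fun k hk hkA => hωW ((hWmem ω).2 ⟨k, hk, hkA⟩)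
    have hsum : ∀ k : ℕ, 1 ≤ k →
        ∑ i ∈ Finset.range k, A.indicator (fun _ => (1 : ℝ)) (τ^[i] ω)
          = A.indicator (fun _ => (1 : ℝ)) ω := by
      intro k hk
      rw [Finset.sum_eq_single_of_mem 0 (Finset.mem_range.2 hk)]
      · simp
      · intro i _ hi
        exact Set.indicator_of_notMem (hzero i (Nat.pos_of_ne_zero hi)) _
    have h0 : Tendsto (fun k : ℕ => (k : ℝ)⁻¹ *
        ∑ i ∈ Finset.range k, A.indicator (fun _ => (1 : ℝ)) (τ^[i] ω)) atTop (𝓝 0) := by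
      have hbase : Tendsto (fun k : ℕ => (k : ℝ)⁻¹ * A.indicator (fun _ => (1 : ℝ)) ω)
          atTop (𝓝 0) := by
        simpa using tendsto_inv_atTop_nhds_zero_nat.mul_const
          (A.indicator (fun _ => (1 : ℝ)) ω)
      refine hbase.congr' ?_
      filter_upwards [eventually_ge_atTop 1] with k hk
      rw [hsum k hk]
    have := tendsto_nhds_unique hω h0
    linarith
  -- the tower C
  set C : Set Ω := ⋃ j ∈ Finset.range n, τ^[j] ⁻¹' B with hCdef
  have hCmeas : MeasurableSet C :=
    MeasurableSet.biUnion (Set.to_countable _) fun j _ => (hτ.iterate j) hBmeas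
  have hCInt : Integrable (C.indicator fun _ => (1 : ℝ)) μ := by
    exact Integrable.indicator (integrable_const (1 : ℝ)) hCmeas
  -- covering: W ⊆ C ∪ (short hits)
  have hcover : ∀ ω : Ω, ω ∈ W → ω ∈ C ∨ ∃ k ∈ Finset.Ico 1 n, τ^[k] ω ∈ A := by
    intro ω hω
    have hex : ∃ k : ℕ, 0 < k ∧ τ^[k] ω ∈ A := (hWmem ω).1 hω
    set T := Nat.find hex with hTdef
    have hT : 0 < T ∧ τ^[T] ω ∈ A := Nat.find_spec hex
    have hmin : ∀ k, k < T → ¬(0 < k ∧ τ^[k] ω ∈ A) := fun k hk => Nat.find_min hex hk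
    by_cases hTn : T < n
    · exact Or.inr ⟨T, Finset.mem_Ico.2 ⟨hT.1, hTn⟩, hT.2⟩
    · left
      push_neg at hTn
      set j := T % n with hjdef
      have hjn : j < n := Nat.mod_lt _ (by omega)
      have hjT : j < T := by
        have := Nat.mod_le T n
        omega
      have hB' : τ^[j] ω ∈ B := by
        refine (hBmem _).2 ⟨T - j, ⟨by omega, ?_⟩, ?_, ?_⟩
        · refine ⟨T / n, ?_⟩
          have := Nat.mod_add_div T n
          omega
        · rw [← Function.iterate_add_apply]
          have he : T - j + j = T := by omega
          rw [he]
          exact hT.2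
        · intro k hk hkT
          rw [← Function.iterate_add_apply]
          have hlt : k + j < T := by omega
          exact fun hmem => (hmin (k + j) hlt) ⟨by omega, hmem⟩
      rw [hCdef]
      exact Set.mem_biUnion (Finset.mem_range.2 hjn) hB'
  -- pointwise inequality
  have hpt : ∀ ω : Ω, W.indicator (fun _ => (1 : ℝ)) ω ≤
      C.indicator (fun _ => (1 : ℝ)) ω + ∑ k ∈ Finset.Ico 1 n, g k ω := by
    intro ω
    have hCnn : (0 : ℝ) ≤ C.indicator (fun _ => (1 : ℝ)) ω :=
      Set.indicator_nonneg (fun _ _ => zero_le_one) ω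
    have hsnn : (0 : ℝ) ≤ ∑ k ∈ Finset.Ico 1 n, g k ω :=
      Finset.sum_nonneg fun k _ => Set.indicator_nonneg (fun _ _ => zero_le_one) ω
    by_cases hω : ω ∈ W
    · rw [Set.indicator_of_mem hω]
      rcases hcover ω hω with hC | ⟨k0, hk0, hk0A⟩
      · rw [Set.indicator_of_mem hC]; linarith
      · have h2' : (1 : ℝ) ≤ ∑ k ∈ Finset.Ico 1 n, g k ω := by
          have := Finset.single_le_sum
            (f := fun k => g k ω)
            (fun k _ => Set.indicator_nonneg (fun _ _ => zero_le_one) ω) hk0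
          have hval : g k0 ω = 1 :=
            Set.indicator_of_mem (show ω ∈ τ^[k0] ⁻¹' A from hk0A) _
          linarith
        linarith
    · rw [Set.indicator_of_notMem hω]; linarith
  have hSumInt : Integrable (∑ k ∈ Finset.Ico 1 n, g k) μ := by
    rw [Finset.sum_fn]
    exact integrable_finset_sum _ fun k _ => hgInt k
  -- conditional expectation chain
  have hWC : μ[W.indicator (fun _ => (1 : ℝ)) | m] ≤ᵐ[μ]
      μ[(C.indicator (fun _ => (1 : ℝ)) + ∑ k ∈ Finset.Ico 1 n, g k) | m] := by
    refine condExp_mono hWInt ?_ (Filter.Eventually.of_forall ?_)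
    · exact hCInt.add hSumInt
    · intro ω
      simpa [Finset.sum_apply] using hpt ω
  have hadd : μ[(C.indicator (fun _ => (1 : ℝ)) + ∑ k ∈ Finset.Ico 1 n, g k) | m] =ᵐ[μ]
      μ[C.indicator (fun _ => (1 : ℝ)) | m] + μ[∑ k ∈ Finset.Ico 1 n, g k | m] :=
    condExp_add hCInt hSumInt m
  have hsumc : μ[∑ k ∈ Finset.Ico 1 n, g k | m] =ᵐ[μ] ∑ k ∈ Finset.Ico 1 n, μ[g k | m] :=
    condExp_finset_sum (fun k _ => hgInt k) m
  have hsumE : ∀ᵐ ω ∂μ, ∑ k ∈ Finset.Ico 1 n, (μ[g k | m]) ω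
      = ((n - 1 : ℕ) : ℝ) * (μ[A.indicator (fun _ => (1 : ℝ)) | m]) ω := by
    have hall : ∀ᵐ ω ∂μ, ∀ k : ℕ, (μ[g k | m]) ω
        = (μ[A.indicator (fun _ => (1 : ℝ)) | m]) ω := ae_all_iff.2 fun k => hgE k
    filter_upwards [hall] with ω hω
    rw [Finset.sum_congr rfl fun k _ => hω k, Finset.sum_const, Nat.card_Ico, nsmul_eq_mul]
  -- the support set S
  have hSm : MeasurableSet[m] {ω' : Ω | 0 < (μ[A.indicator (fun _ => (1 : ℝ)) | m]) ω'} :=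
    measurableSet_lt measurable_const stronglyMeasurable_condExp.measurable
  have hSInt : Integrable
      ({ω' : Ω | 0 < (μ[A.indicator (fun _ => (1 : ℝ)) | m]) ω'}.indicator
        (fun _ => (1 : ℝ))) μ := by
    exact Integrable.indicator (integrable_const (1 : ℝ)) (hm _ hSm)
  have hScond : μ[{ω' : Ω | 0 < (μ[A.indicator (fun _ => (1 : ℝ)) | m]) ω'}.indicator
      (fun _ => (1 : ℝ)) | m] =
      {ω' : Ω | 0 < (μ[A.indicator (fun _ => (1 : ℝ)) | m]) ω'}.indicator (fun _ => (1 : ℝ)) := by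
    refine condExp_of_stronglyMeasurable hm ?_ hSInt
    exact (stronglyMeasurable_const.indicator hSm)
  have hSle : {ω' : Ω | 0 < (μ[A.indicator (fun _ => (1 : ℝ)) | m]) ω'}.indicator
      (fun _ => (1 : ℝ)) ≤ᵐ[μ] W.indicator (fun _ => (1 : ℝ)) := by
    filter_upwards [hSW] with ω h
    by_cases hω : 0 < (μ[A.indicator (fun _ => (1 : ℝ)) | m]) ω
    · have hmem : ω ∈ {ω' : Ω | 0 < (μ[A.indicator (fun _ => (1 : ℝ)) | m]) ω'} := hω
      rw [Set.indicator_of_mem hmem, Set.indicator_of_mem (h hω)]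
    · have hmem : ω ∉ {ω' : Ω | 0 < (μ[A.indicator (fun _ => (1 : ℝ)) | m]) ω'} := hω
      rw [Set.indicator_of_notMem hmem]
      exact Set.indicator_nonneg (fun _ _ => zero_le_one) ω
  have hS2 : {ω' : Ω | 0 < (μ[A.indicator (fun _ => (1 : ℝ)) | m]) ω'}.indicator
      (fun _ => (1 : ℝ)) ≤ᵐ[μ] μ[W.indicator (fun _ => (1 : ℝ)) | m] := by
    have := condExp_mono (m := m) hSInt hWInt hSle
    rwa [hScond] at this
  have hCnonneg : (0 : Ω → ℝ) ≤ᵐ[μ] μ[C.indicator (fun _ => (1 : ℝ)) | m] :=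
    condExp_nonneg (Filter.Eventually.of_forall fun ω =>
      Set.indicator_nonneg (fun _ _ => zero_le_one) ω)
  filter_upwards [hS2, hWC, hadd, hsumc, hsumE, hCnonneg] with ω e1 e2 e3 e4 e5 e6
  have e3' : (μ[(C.indicator (fun _ => (1 : ℝ)) + ∑ k ∈ Finset.Ico 1 n, g k) | m]) ω
      = (μ[C.indicator (fun _ => (1 : ℝ)) | m]) ω + (μ[∑ k ∈ Finset.Ico 1 n, g k | m]) ω := e3
  have e4' : (μ[∑ k ∈ Finset.Ico 1 n, g k | m]) ω
      = ∑ k ∈ Finset.Ico 1 n, (μ[g k | m]) ω := by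
    rw [e4]; simp [Finset.sum_apply]
  have e6' : (0 : ℝ) ≤ (μ[C.indicator (fun _ => (1 : ℝ)) | m]) ω := e6
  refine sup_le ?_ e6'
  have := e1.trans e2
  rw [e3', e4', e5] at this
  linarith
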